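/- Let K be a convex body in ℝⁿ containing the origin in its interior and let f:S^{n−1}→ℝ be continuous, with K_t(f)=W(h_K+tf) defined for t in an interval (a,b) around 0 on which h_K+tf > 0 pointwise. Then for S_K-almost every u ∈ S^{n−1}, the function t ↦ h_{K_t(f)}(u) is differentiable at t=0 with derivative f(u); that is, lim_{t→0} (h_{K_t(f)}(u) − h_K(u))/t = f(u) for S_K-almost every u. -/

import Mathlib

open scoped Pointwise NNReal ENNReal
open MeasureTheory Metric Set Filter

noncomputable section

abbrev Euc (n : ℕ) : Type := EuclideanSpace ℝ (Fin n)

/-- A convex body: a compact convex set with nonempty interior. -/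
def IsConvexBody {n : ℕ} (K : Set (Euc n)) : Prop :=
  Convex ℝ K ∧ IsCompact K ∧ (interior K).Nonempty

/-- The mixed volume of `n` compact convex sets in `ℝⁿ`, via the polarization formula. -/
noncomputable def mixedVolume {n : ℕ} (K : Fin n → Set (Euc n)) : ℝ :=
  (n.factorial : ℝ)⁻¹ *
    ∑ S ∈ Finset.univ.powerset.filter (fun S : Finset (Fin n) => S.Nonempty),
      (-1 : ℝ) ^ (n - S.card) * (volume (∑ i ∈ S, K i)).toReal

/-- The support function of a set. -/
noncomputable def suppFn {n : ℕ} (K : Set (Euc n)) (u : Euc n) : ℝ :=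
  sSup ((fun x => (inner ℝ x u : ℝ)) '' K)

/-- The face of `K` with outer normal `u`. -/
def face {n : ℕ} (K : Set (Euc n)) (u : Euc n) : Set (Euc n) :=
  {x ∈ K | (inner ℝ x u : ℝ) = suppFn K u}

/-- The surface area measure of `K`, as a set function:
`S_K(Ω) = H^{n-1}(τ(K,Ω))` where `τ(K,Ω)` is the inverse spherical image. -/
noncomputable def surfMeas {n : ℕ} (K : Set (Euc n)) (Ω : Set (Euc n)) : ℝ≥0∞ :=
  μH[(n : ℝ) - 1] {x | x ∈ frontier K ∧ ∃ u ∈ Ω, ‖u‖ = 1 ∧ (inner ℝ x u : ℝ) = suppFn K u}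

/-- The mixed area measure `S(K_1,…,K_{n-1}, Ω)` via the polarization formula. -/
noncomputable def mixedAreaMeas {n : ℕ} (K : Fin (n - 1) → Set (Euc n)) (Ω : Set (Euc n)) : ℝ :=
  ((n - 1).factorial : ℝ)⁻¹ *
    ∑ S ∈ Finset.univ.powerset.filter (fun S : Finset (Fin (n - 1)) => S.Nonempty),
      (-1 : ℝ) ^ (n - 1 - S.card) * (surfMeas (∑ i ∈ S, K i) Ω).toReal

/-- The `m`-dimensional mixed volume of `m` compact convex sets lying in (translates of) an
`m`-dimensional subspace of `ℝⁿ`, computed with the `m`-dimensional Hausdorff measure. -/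
noncomputable def hausdorffMixedVolume {n : ℕ} (m : ℕ) (K : Fin m → Set (Euc n)) : ℝ :=
  (m.factorial : ℝ)⁻¹ *
    ∑ S ∈ Finset.univ.powerset.filter (fun S : Finset (Fin m) => S.Nonempty),
      (-1 : ℝ) ^ (m - S.card) * (μH[(m : ℝ)] (∑ i ∈ S, K i)).toReal

/-- The Wulff shape of a function `g` (only the values of `g` on the unit sphere matter). -/
def wulff {n : ℕ} (g : Euc n → ℝ) : Set (Euc n) :=
  {x | ∀ u : Euc n, ‖u‖ = 1 → (inner ℝ x u : ℝ) ≤ g u}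

/-- `A` is homothetic to `B` if `A = λ • B + v` for some `λ > 0`, `v ∈ ℝⁿ`. -/
def Homothetic {n : ℕ} (A B : Set (Euc n)) : Prop :=
  ∃ lam : ℝ, 0 < lam ∧ ∃ v : Euc n, A = (fun x => lam • x + v) '' B

/-- `K` is weakly decomposable if there is a nonempty compact convex set `M`, not homothetic
to `K`, with `S_{K+M}` absolutely continuous with respect to `S_K`. -/
def WeaklyDecomposable {n : ℕ} (K : Set (Euc n)) : Prop :=
  ∃ M : Set (Euc n), Convex ℝ M ∧ IsCompact M ∧ M.Nonempty ∧ ¬ Homothetic M K ∧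
    ∀ Ω : Set (Euc n), MeasurableSet Ω → surfMeas K Ω = 0 → surfMeas (K + M) Ω = 0

def IsSimplex {n : ℕ} (K : Set (Euc n)) : Prop :=
  ∃ p : Fin (n + 1) → Euc n, AffineIndependent ℝ p ∧ K = convexHull ℝ (Set.range p)

def IsPolytope {n : ℕ} (K : Set (Euc n)) : Prop :=
  ∃ S : Finset (Euc n), K = convexHull ℝ (S : Set (Euc n))

/-- The set of outer unit normals of facets ((n-1)-dimensional faces) of `K`. -/
def facetNormals {n : ℕ} (K : Set (Euc n)) : Set (Euc n) :=
  {u | ‖u‖ = 1 ∧ Module.finrank ℝ (affineSpan ℝ (face K u)).direction = n - 1}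

/-- A zonotope: a finite Minkowski sum of segments. -/
def IsZonotope {n : ℕ} (Z : Set (Euc n)) : Prop :=
  ∃ (m : ℕ) (v w : Fin m → Euc n), Z = ∑ i : Fin m, segment ℝ (v i) (w i)

/-- A zonoid: a compact convex set which is a Hausdorff-metric limit of zonotopes. -/
def IsZonoid {n : ℕ} (K : Set (Euc n)) : Prop :=
  IsCompact K ∧ Convex ℝ K ∧
    ∃ Z : ℕ → Set (Euc n), (∀ m, IsZonotope (Z m)) ∧
      Tendsto (fun m => EMetric.hausdorffEdist (Z m) K) atTop (nhds 0)

/-!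
Aleksandrov's lemma: if `u` is the only unit normal of `K` at `x₀`, the point `x₀ + t f(u) u`
violates the constraints of `W(h_K + t f)` only by `o(t)`, since the constraints whose normals are
near `u` move at rate `f` while the others are slack by a fixed amount. Shrinking it towards the
origin, which is interior, gives `h_{K_t}(u) ≥ h_K(u) + t f(u) - o(t)`; the constraint at `u`
gives the reverse inequality.

It remains to see that `S_K`-almost every `u` is the normal of such a smooth point. Where the
normals make an angle bounded away from `π/2` with a coordinate axis, `∂K` is the graph of a
Lipschitz concave function over a coordinate hyperplane; by Rademacher's theorem it is
differentiable, hence `∂K` has a unique normal, off an `H^{n-1}`-null set. Countably many such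
patches cover `∂K`, and by inner regularity their smooth parts can be taken σ-compact, which makes
their spherical image measurable.
-/

open scoped Topology RealInnerProductSpace
open Bornology

section SupportFunction

variable {n : ℕ} {K : Set (Euc n)}

lemma bddAbove_inner_image (hK : IsBounded K) (u : Euc n) :
    BddAbove ((fun x => ⟪x, u⟫) '' K) := by
  obtain ⟨C, hC⟩ := isBounded_iff_forall_norm_le.1 hK
  refine ⟨C * ‖u‖, ?_⟩
  rintro _ ⟨x, hx, rfl⟩
  exact (real_inner_le_norm x u).trans (by gcongr; exact hC x hx)

lemma inner_le_suppFn (hK : IsBounded K) {x : Euc n} (hx : x ∈ K) (u : Euc n) :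
    ⟪x, u⟫ ≤ suppFn K u :=
  le_csSup (bddAbove_inner_image hK u) ⟨x, hx, rfl⟩

lemma suppFn_le (hne : K.Nonempty) {u : Euc n} {c : ℝ} (h : ∀ x ∈ K, ⟪x, u⟫ ≤ c) :
    suppFn K u ≤ c :=
  csSup_le (hne.image _) (by rintro _ ⟨x, hx, rfl⟩; exact h x hx)

lemma continuous_suppFn (hK : IsCompact K) : Continuous (suppFn K) :=
  hK.continuous_sSup (f := fun u x => ⟪x, u⟫) (by fun_prop)

lemma suppFn_neg (K : Set (Euc n)) (u : Euc n) : suppFn (-K) u = suppFn K (-u) := by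
  simp only [suppFn, ← Set.image_neg_eq_neg, Set.image_image, inner_neg_left, ← inner_neg_right]

lemma exists_pos_le_suppFn (hK : IsBounded K) (h0 : (0 : Euc n) ∈ interior K) :
    ∃ ρ > 0, ∀ u : Euc n, ‖u‖ = 1 → ρ ≤ suppFn K u := by
  obtain ⟨r, hr, hball⟩ := Metric.mem_nhds_iff.1 (mem_interior_iff_mem_nhds.1 h0)
  refine ⟨r / 2, half_pos hr, fun u hu => ?_⟩
  have hmem : (r / 2) • u ∈ K := hball (by
    rw [Metric.mem_ball, dist_zero_right, norm_smul, hu, Real.norm_of_nonneg (by positivity)]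
    linarith)
  simpa [real_inner_smul_left, real_inner_self_eq_norm_sq, hu] using inner_le_suppFn hK hmem u

end SupportFunction

def IsUnitNormal {n : ℕ} (K : Set (Euc n)) (x u : Euc n) : Prop :=
  ‖u‖ = 1 ∧ ⟪x, u⟫ = suppFn K u

def IsSmoothPoint {n : ℕ} (K : Set (Euc n)) (x : Euc n) : Prop :=
  x ∈ K ∧ ∀ v w, IsUnitNormal K x v → IsUnitNormal K x w → v = w

/-- The spherical image `σ(K, C)`. -/
def sphericalImage {n : ℕ} (K C : Set (Euc n)) : Set (Euc n) :=
  {u | ∃ x ∈ C, IsUnitNormal K x u}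

section Normals

variable {n : ℕ} {K : Set (Euc n)}

lemma isUnitNormal_neg_iff {x u : Euc n} : IsUnitNormal (-K) (-x) (-u) ↔ IsUnitNormal K x u := by
  simp only [IsUnitNormal, norm_neg, suppFn_neg, neg_neg, inner_neg_neg]

lemma IsSmoothPoint.of_neg {x : Euc n} (h : IsSmoothPoint (-K) (-x)) : IsSmoothPoint K x := by
  refine ⟨by simpa using h.1, fun v w hv hw => neg_injective ?_⟩
  exact h.2 _ _ (isUnitNormal_neg_iff.2 hv) (isUnitNormal_neg_iff.2 hw)

/-- Otherwise `K` would lie in the hyperplane `⟪·, u⟫ = ⟪x, u⟫`. -/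
lemma not_isUnitNormal_neg (hK : IsBounded K) (hint : (interior K).Nonempty) {x u : Euc n}
    (hu : IsUnitNormal K x u) : ¬ IsUnitNormal K x (-u) := by
  rintro ⟨-, hnu⟩
  obtain ⟨z, hz⟩ := hint
  obtain ⟨r, hr, hball⟩ := Metric.mem_nhds_iff.1 (mem_interior_iff_mem_nhds.1 hz)
  have hmem : z + (r / 2) • u ∈ K := hball (by
    rw [Metric.mem_ball, dist_self_add_left, norm_smul, hu.1, Real.norm_of_nonneg (by positivity)]
    linarith)
  have h1 := inner_le_suppFn hK hmem u
  have h2 := inner_le_suppFn hK (interior_subset hz) (-u)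
  rw [← hu.2] at h1
  rw [← hnu] at h2
  simp only [inner_add_left, real_inner_smul_left, real_inner_self_eq_norm_sq, hu.1,
    inner_neg_right] at h1 h2
  linarith

lemma isCompact_normalPairs (hK : IsCompact K) {A : Set (Euc n)} (hA : IsCompact A) :
    IsCompact {p : Euc n × Euc n | p.1 ∈ A ∧ IsUnitNormal K p.1 p.2} := by
  refine (hA.prod (isCompact_sphere 0 1)).of_isClosed_subset ?_ ?_
  · exact (hA.isClosed.preimage continuous_fst).inter
      ((isClosed_eq (by fun_prop) continuous_const).inter
        (isClosed_eq (by fun_prop) ((continuous_suppFn hK).comp continuous_snd)))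
  · rintro p ⟨hpA, hp1, -⟩
    exact ⟨hpA, by simpa using hp1⟩

lemma measurableSet_sphericalImage (hK : IsCompact K) {C : Set (Euc n)}
    (hC : IsSigmaCompact C) : MeasurableSet (sphericalImage K C) := by
  obtain ⟨Cs, hCs, rfl⟩ := hC
  have : sphericalImage K (⋃ k, Cs k) =
      ⋃ k, Prod.snd '' {p : Euc n × Euc n | p.1 ∈ Cs k ∧ IsUnitNormal K p.1 p.2} := by
    ext u
    simp only [sphericalImage, mem_iUnion, mem_image, mem_ofPred_eq]
    exact ⟨fun ⟨x, ⟨k, hx⟩, hu⟩ => ⟨k, (x, u), ⟨hx, hu⟩, rfl⟩,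
      fun ⟨k, p, ⟨hp, hpu⟩, hpu'⟩ => ⟨p.1, ⟨k, hp⟩, hpu' ▸ hpu⟩⟩
  rw [this]
  exact MeasurableSet.iUnion fun k =>
    ((isCompact_normalPairs hK (hCs k)).image continuous_snd).isClosed.measurableSet

end Normals

lemma exists_pos_mul_inner_eq {E : Type*} [NormedAddCommGroup E] [InnerProductSpace ℝ E]
    [CompleteSpace E] {f : StrongDual ℝ E} (hf : f ≠ 0) :
    ∃ c > 0, ∃ v : E, ‖v‖ = 1 ∧ ∀ x, f x = c * ⟪x, v⟫ := by
  set z := (InnerProductSpace.toDual ℝ E).symm f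
  have hz : z ≠ 0 := by simpa [z] using hf
  have hfz : ∀ x, f x = ⟪z, x⟫ := fun x => by
    rw [← InnerProductSpace.toDual_apply_apply, LinearIsometryEquiv.apply_symm_apply]
  refine ⟨‖z‖, norm_pos_iff.2 hz, ‖z‖⁻¹ • z, by simp [norm_smul, hz], fun x => ?_⟩
  rw [hfz, real_inner_smul_right, real_inner_comm, ← mul_assoc,
    mul_inv_cancel₀ (norm_ne_zero_iff.2 hz), one_mul]

section Wulff

variable {n : ℕ} {g : Euc n → ℝ}

lemma zero_mem_wulff (hg : ∀ u : Euc n, ‖u‖ = 1 → 0 ≤ g u) : (0 : Euc n) ∈ wulff g :=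
  fun u hu => by simpa using hg u hu

lemma wulff_subset_closedBall {B : ℝ} (hB0 : 0 ≤ B) (hB : ∀ u : Euc n, ‖u‖ = 1 → g u ≤ B) :
    wulff g ⊆ Metric.closedBall 0 B := by
  intro x hx
  rw [mem_closedBall_zero_iff]
  rcases eq_or_ne x 0 with rfl | hx0
  · simpa using hB0
  · have hu : ‖‖x‖⁻¹ • x‖ = 1 := by simp [norm_smul, hx0]
    have := hx _ hu
    rw [real_inner_smul_right, real_inner_self_eq_norm_sq, sq, inv_mul_cancel_left₀
      (norm_ne_zero_iff.2 hx0)] at this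
    exact this.trans (hB _ hu)

lemma suppFn_wulff_le (hg : ∀ u : Euc n, ‖u‖ = 1 → 0 ≤ g u) {u : Euc n} (hu : ‖u‖ = 1) :
    suppFn (wulff g) u ≤ g u :=
  suppFn_le ⟨0, zero_mem_wulff hg⟩ fun _ hx => hx u hu

lemma smul_mem_wulff {r δ : ℝ} (hr : 0 < r) (hδ : 0 ≤ δ) (hδr : δ ≤ r)
    (hg : ∀ u : Euc n, ‖u‖ = 1 → r ≤ g u) {z : Euc n}
    (hz : ∀ u : Euc n, ‖u‖ = 1 → ⟪z, u⟫ ≤ g u + δ) : (1 - δ / r) • z ∈ wulff g := by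
  intro u hu
  have hδr' : δ / r * r = δ := div_mul_cancel₀ δ hr.ne'
  have h1 : 0 ≤ 1 - δ / r := sub_nonneg.2 ((div_le_one hr).2 hδr)
  have h2 : 0 ≤ δ / r := div_nonneg hδ hr.le
  rw [real_inner_smul_left]
  nlinarith [mul_le_mul_of_nonneg_left (hz u hu) h1, mul_le_mul_of_nonneg_left (hg u hu) h2]

lemma wulff_suppFn {K : Set (Euc n)} (hconv : Convex ℝ K) (hK : IsCompact K)
    (hne : K.Nonempty) : wulff (suppFn K) = K := by
  refine Set.Subset.antisymm (fun x hx => ?_) fun x hx u _ => inner_le_suppFn hK.isBounded hx u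
  by_contra hxK
  obtain ⟨f, s, hfK, hfx⟩ := geometric_hahn_banach_closed_point hconv hK.isClosed hxK
  obtain ⟨y, hy⟩ := hne
  obtain ⟨c, hc, v, hv, hfv⟩ := exists_pos_mul_inner_eq (f := f) fun h0 => by
    simpa [h0] using (hfK y hy).trans hfx
  have hsupp : suppFn K v ≤ s / c :=
    suppFn_le ⟨y, hy⟩ fun z hz => (le_div_iff₀' hc).2 (hfv z ▸ (hfK z hz).le)
  have hxv : s / c < ⟪x, v⟫ := (div_lt_iff₀' hc).2 (hfv x ▸ hfx)
  exact (hxv.trans_le (hx v hv)).not_ge hsupp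

end Wulff

lemma abs_suppFn_wulff_sub_le {n : ℕ} {g : Euc n → ℝ} {r δ B : ℝ} (hr : 0 < r) (hδ : 0 ≤ δ)
    (hδr : δ ≤ r) (hgr : ∀ v : Euc n, ‖v‖ = 1 → r ≤ g v) (hgB : ∀ v : Euc n, ‖v‖ = 1 → g v ≤ B)
    {z : Euc n} (hz : ∀ v : Euc n, ‖v‖ = 1 → ⟪z, v⟫ ≤ g v + δ) {u : Euc n} (hu : ‖u‖ = 1)
    (hzu : ⟪z, u⟫ = g u) : |suppFn (wulff g) u - g u| ≤ δ / r * B := by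
  have hB0 : 0 ≤ B := (hr.le.trans (hgr u hu)).trans (hgB u hu)
  have hup : suppFn (wulff g) u ≤ g u := suppFn_wulff_le (fun v hv => hr.le.trans (hgr v hv)) hu
  have hlow : (1 - δ / r) * g u ≤ suppFn (wulff g) u := by
    have hbdd : IsBounded (wulff g) := isBounded_closedBall.subset (wulff_subset_closedBall hB0 hgB)
    simpa [real_inner_smul_left, hzu] using
      inner_le_suppFn hbdd (smul_mem_wulff hr hδ hδr hgr hz) u
  have hδB : δ / r * g u ≤ δ / r * B := by gcongr; exact hgB u hu
  rw [abs_sub_comm, abs_of_nonneg (sub_nonneg.2 hup)]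
  linarith

lemma eventually_abs_mul_le (M : ℝ) {c : ℝ} (hc : 0 < c) : ∀ᶠ t in 𝓝 (0 : ℝ), |t| * M ≤ c := by
  have hcont : Continuous fun t : ℝ => |t| * M := by fun_prop
  have : Tendsto (fun t : ℝ => |t| * M) (𝓝 0) (𝓝 0) := hcont.tendsto' 0 0 (by simp)
  exact (this.eventually (gt_mem_nhds hc)).mono fun _ => le_of_lt

/-- Where `|ψ| ≥ ε`, `φ` has a positive minimum. -/
lemma eventually_mul_le_add_abs_mul {X : Type*} [TopologicalSpace X] {S : Set X}
    (hS : IsCompact S) {φ ψ : X → ℝ} (hφ : Continuous φ) (hψ : Continuous ψ)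
    (hφ0 : ∀ x ∈ S, 0 ≤ φ x) (hψ0 : ∀ x ∈ S, φ x = 0 → ψ x = 0) {ε : ℝ} (hε : 0 < ε) :
    ∀ᶠ t in 𝓝 (0 : ℝ), ∀ x ∈ S, t * ψ x ≤ φ x + |t| * ε := by
  set T := S ∩ {x | ε ≤ |ψ x|}
  obtain ⟨c, hc, hcT⟩ : ∃ c > 0, ∀ x ∈ T, c ≤ φ x := by
    refine (hS.inter_right (isClosed_le continuous_const hψ.abs)).exists_forall_le'
      hφ.continuousOn fun x hx => (hφ0 x hx.1).lt_of_ne' fun hφx => ?_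
    have hεψ : ε ≤ |ψ x| := hx.2
    rw [hψ0 x hx.1 hφx, abs_zero] at hεψ
    exact hε.not_ge hεψ
  obtain ⟨M, hM⟩ := hS.exists_bound_of_continuousOn hψ.continuousOn
  filter_upwards [eventually_abs_mul_le M hc] with t ht x hx
  have htψ : t * ψ x ≤ |t| * |ψ x| := (abs_mul t (ψ x)).symm ▸ le_abs_self _
  have htε : 0 ≤ |t| * ε := by positivity
  by_cases hxT : ε ≤ |ψ x|
  · have : |t| * |ψ x| ≤ |t| * M := by gcongr; exact hM x hx
    linarith [hcT x ⟨hx, hxT⟩]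
  · have : |t| * |ψ x| ≤ |t| * ε := by gcongr; exact (not_le.1 hxT).le
    linarith [hφ0 x hx]

theorem hasDerivAt_suppFn_wulff {n : ℕ} {K : Set (Euc n)} (hconv : Convex ℝ K)
    (hK : IsCompact K) (h0 : (0 : Euc n) ∈ interior K) {f : Euc n → ℝ} (hf : Continuous f)
    {x₀ u : Euc n} (hx₀ : IsSmoothPoint K x₀) (hu : IsUnitNormal K x₀ u) :
    HasDerivAt (fun t => suppFn (wulff (fun v => suppFn K v + t * f v)) u) (f u) 0 := by
  have hS : IsCompact (sphere (0 : Euc n) 1) := isCompact_sphere 0 1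
  obtain ⟨ρ, hρ, hρK⟩ := exists_pos_le_suppFn hK.isBounded h0
  obtain ⟨M, hM⟩ := hS.exists_bound_of_continuousOn hf.continuousOn
  obtain ⟨R, hR⟩ := hS.exists_bound_of_continuousOn (continuous_suppFn hK).continuousOn
  have hsph : ∀ v : Euc n, ‖v‖ = 1 → v ∈ sphere (0 : Euc n) 1 := fun v hv => by simpa using hv
  have hRρ : 0 < R + ρ := by
    have := (norm_nonneg _).trans (hR u (hsph u hu.1)); linarith
  have hF0 : suppFn (wulff (fun v => suppFn K v + 0 * f v)) u = suppFn K u := by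
    simp only [zero_mul, add_zero]
    rw [wulff_suppFn hconv hK ⟨0, interior_subset h0⟩]
  have hψ0 : ∀ v ∈ sphere (0 : Euc n) 1, suppFn K v - ⟪x₀, v⟫ = 0 → f u * ⟪u, v⟫ - f v = 0 := by
    intro v hv hφv
    have hvu : v = u := hx₀.2 v u ⟨by simpa using hv, (sub_eq_zero.1 hφv).symm⟩ hu
    simp [hvu, hu.1]
  rw [hasDerivAt_iff_isLittleO, Asymptotics.isLittleO_iff]
  intro c hc
  -- chosen so that the error bound `|t| * ε / (ρ / 2) * (R + ρ)` below equals `c * |t|`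
  set ε := c * (ρ / 2) / (R + ρ)
  have hε : 0 < ε := by positivity
  filter_upwards [eventually_mul_le_add_abs_mul hS (φ := fun v => suppFn K v - ⟪x₀, v⟫)
      (ψ := fun v => f u * ⟪u, v⟫ - f v) ((continuous_suppFn hK).sub (by fun_prop))
      (by fun_prop) (fun v _ => sub_nonneg.2 (inner_le_suppFn hK.isBounded hx₀.1 v)) hψ0 hε,
    eventually_abs_mul_le M (half_pos hρ), eventually_abs_mul_le ε (half_pos hρ)]
    with t hgap htM htε
  have hft : ∀ v : Euc n, ‖v‖ = 1 → |t * f v| ≤ ρ / 2 := fun v hv => by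
    rw [abs_mul]
    exact (mul_le_mul_of_nonneg_left (hM v (hsph v hv)) (abs_nonneg t)).trans htM
  have hz : ∀ v : Euc n, ‖v‖ = 1 →
      ⟪x₀ + (t * f u) • u, v⟫ ≤ suppFn K v + t * f v + |t| * ε := fun v hv => by
    have := hgap v (hsph v hv)
    rw [inner_add_left, real_inner_smul_left]
    linarith
  have hkey := abs_suppFn_wulff_sub_le (B := R + ρ) (half_pos hρ) (by positivity) htε
    (fun v hv => by linarith [hρK v hv, (abs_le.1 (hft v hv)).1])
    (fun v hv => by linarith [(abs_le.1 (hR v (hsph v hv))).2, (abs_le.1 (hft v hv)).2]) hz hu.1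
    (by rw [inner_add_left, real_inner_smul_left, hu.2, real_inner_self_eq_norm_sq, hu.1, one_pow,
      mul_one])
  simp only [sub_zero, smul_eq_mul, Real.norm_eq_abs, hF0, sub_sub]
  refine hkey.trans_eq ?_
  simp only [ε]
  field_simp

section Coordinates

variable {m : ℕ} (i : Fin (m + 1))

def insertCoord (y : Euc m) (s : ℝ) : Euc (m + 1) :=
  WithLp.toLp 2 (i.insertNth s y.ofLp)

def removeCoord (x : Euc (m + 1)) : Euc m :=
  WithLp.toLp 2 (i.removeNth x.ofLp)

lemma inner_insertCoord (y : Euc m) (s : ℝ) (v : Euc (m + 1)) :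
    ⟪insertCoord i y s, v⟫ = ⟪y, removeCoord i v⟫ + s * v i := by
  simp only [PiLp.inner_apply, RCLike.inner_apply, conj_trivial]
  rw [Fin.sum_univ_succAbove _ i]
  simp [insertCoord, removeCoord, Fin.removeNth]
  ring

@[simp]
lemma insertCoord_removeCoord (x : Euc (m + 1)) : insertCoord i (removeCoord i x) (x i) = x := by
  simp [insertCoord, removeCoord]

@[simp]
lemma removeCoord_insertCoord (y : Euc m) (s : ℝ) : removeCoord i (insertCoord i y s) = y := by
  ext j
  simp [insertCoord, removeCoord]

@[simp]
lemma insertCoord_apply_self (y : Euc m) (s : ℝ) : insertCoord i y s i = s := by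
  simp [insertCoord]

lemma insertCoord_add (y y' : Euc m) (s s' : ℝ) :
    insertCoord i (y + y') (s + s') = insertCoord i y s + insertCoord i y' s' :=
  congrArg (WithLp.toLp 2) (Fin.insertNth_add (α := fun _ => ℝ) i s s' y.ofLp y'.ofLp)

lemma insertCoord_sub (y y' : Euc m) (s s' : ℝ) :
    insertCoord i (y - y') (s - s') = insertCoord i y s - insertCoord i y' s' :=
  congrArg (WithLp.toLp 2) (Fin.insertNth_sub (α := fun _ => ℝ) i s s' y.ofLp y'.ofLp)

lemma insertCoord_smul (a : ℝ) (y : Euc m) (s : ℝ) :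
    insertCoord i (a • y) (a * s) = a • insertCoord i y s := by
  ext j
  rcases eq_or_ne j i with rfl | hj
  · simp [insertCoord]
  · obtain ⟨k, rfl⟩ := Fin.exists_succAbove_eq hj
    simp [insertCoord, Fin.insertNth_apply_succAbove]

lemma insertCoord_zero_zero : insertCoord i (0 : Euc m) 0 = 0 := by
  simpa using insertCoord_smul i 0 0 0

lemma removeCoord_sub (x x' : Euc (m + 1)) :
    removeCoord i (x - x') = removeCoord i x - removeCoord i x' := rfl

lemma isLinearMap_removeCoord : IsLinearMap ℝ (removeCoord i) :=
  ⟨fun _ _ => rfl, fun _ _ => rfl⟩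

lemma continuous_removeCoord : Continuous (removeCoord i) :=
  LinearMap.continuous_of_finiteDimensional ((isLinearMap_removeCoord i).mk' _)

lemma continuous_insertCoord (y : Euc m) : Continuous (insertCoord i y) := by
  unfold insertCoord; fun_prop

lemma norm_insertCoord_sq (y : Euc m) (s : ℝ) : ‖insertCoord i y s‖ ^ 2 = ‖y‖ ^ 2 + s ^ 2 := by
  rw [← real_inner_self_eq_norm_sq, ← real_inner_self_eq_norm_sq, inner_insertCoord,
    removeCoord_insertCoord, insertCoord_apply_self, sq]

lemma norm_insertCoord_le (y : Euc m) (s : ℝ) : ‖insertCoord i y s‖ ≤ ‖y‖ + |s| := by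
  have := norm_insertCoord_sq i y s
  nlinarith [norm_nonneg (insertCoord i y s), norm_nonneg y, abs_nonneg s, sq_abs s]

lemma norm_removeCoord_le (x : Euc (m + 1)) : ‖removeCoord i x‖ ≤ ‖x‖ := by
  have := norm_insertCoord_sq i (removeCoord i x) (x i)
  rw [insertCoord_removeCoord] at this
  nlinarith [norm_nonneg x, norm_nonneg (removeCoord i x), sq_nonneg (x i)]

end Coordinates

section UpperFunction

variable {m : ℕ} (i : Fin (m + 1)) {K : Set (Euc (m + 1))}

def upperFn (K : Set (Euc (m + 1))) (y : Euc m) : ℝ :=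
  sSup {s | insertCoord i y s ∈ K}

lemma bddAbove_fiber (hK : IsCompact K) (y : Euc m) : BddAbove {s | insertCoord i y s ∈ K} := by
  obtain ⟨B, hB⟩ := (hK.image (PiLp.continuous_apply 2 _ i)).bddAbove
  exact ⟨B, fun s hs => by simpa using hB ⟨_, hs, rfl⟩⟩

lemma insertCoord_upperFn_mem (hK : IsCompact K) {y : Euc m} (hy : y ∈ removeCoord i '' K) :
    insertCoord i y (upperFn i K y) ∈ K := by
  obtain ⟨x, hx, rfl⟩ := hy
  exact IsClosed.csSup_mem (hK.isClosed.preimage (continuous_insertCoord i _))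
    ⟨x i, by simpa using hx⟩ (bddAbove_fiber i hK _)

lemma le_upperFn (hK : IsCompact K) {y : Euc m} {s : ℝ} (hs : insertCoord i y s ∈ K) :
    s ≤ upperFn i K y :=
  le_csSup (bddAbove_fiber i hK y) hs

lemma concaveOn_upperFn (hconv : Convex ℝ K) (hK : IsCompact K) :
    ConcaveOn ℝ (removeCoord i '' K) (upperFn i K) := by
  refine ⟨hconv.is_linear_image (isLinearMap_removeCoord i), fun y hy y' hy' a b ha hb hab => ?_⟩
  refine le_upperFn i hK ?_
  rw [smul_eq_mul, smul_eq_mul, insertCoord_add, insertCoord_smul, insertCoord_smul]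
  exact hconv (insertCoord_upperFn_mem i hK hy) (insertCoord_upperFn_mem i hK hy') ha hb hab

lemma upperFn_removeCoord (hK : IsCompact K) {x v : Euc (m + 1)} (hx : x ∈ K)
    (hv : ⟪x, v⟫ = suppFn K v) (hvi : 0 < v i) : upperFn i K (removeCoord i x) = x i := by
  refine le_antisymm ?_ (le_upperFn i hK (by simpa using hx))
  refine csSup_le ⟨x i, by simpa using hx⟩ fun s hs => ?_
  have := inner_le_suppFn hK.isBounded hs v
  rw [← hv, ← insertCoord_removeCoord i x, inner_insertCoord, inner_insertCoord,
    removeCoord_insertCoord] at this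
  nlinarith

end UpperFunction

section Smoothness

variable {m : ℕ} (i : Fin (m + 1)) {K : Set (Euc (m + 1))}

/-- Along the graph of `upperFn`, `⟪·, v⟫` is maximal at a point with normal `v`. -/
lemma inner_removeCoord_add_mul_fderiv_eq_zero (hK : IsCompact K) {y : Euc m}
    (hy : y ∈ interior (removeCoord i '' K)) (hd : DifferentiableAt ℝ (upperFn i K) y)
    {v : Euc (m + 1)} (hv : ⟪insertCoord i y (upperFn i K y), v⟫ = suppFn K v) (e : Euc m) :
    ⟪removeCoord i v, e⟫ + v i * fderiv ℝ (upperFn i K) y e = 0 := by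
  set F : Euc m → ℝ := fun y' => ⟪removeCoord i v, y'⟫ + v i * upperFn i K y'
  have hF : ∀ y', F y' = ⟪insertCoord i y' (upperFn i K y'), v⟫ := fun y' => by
    rw [inner_insertCoord, real_inner_comm, mul_comm]
  have hmax : IsLocalMax F y := by
    filter_upwards [isOpen_interior.mem_nhds hy] with y' hy'
    rw [hF, hF, hv]
    exact inner_le_suppFn hK.isBounded (insertCoord_upperFn_mem i hK (interior_subset hy')) v
  have hderiv : HasFDerivAt F (innerSL ℝ (removeCoord i v) + v i • fderiv ℝ (upperFn i K) y) y :=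
    (innerSL ℝ (removeCoord i v)).hasFDerivAt.add (hd.hasFDerivAt.const_mul (v i))
  simpa using DFunLike.congr_fun (hmax.hasFDerivAt_eq_zero hderiv) e

lemma smul_eq_smul_of_isUnitNormal (hK : IsCompact K) {y : Euc m}
    (hy : y ∈ interior (removeCoord i '' K)) (hd : DifferentiableAt ℝ (upperFn i K) y)
    {v w : Euc (m + 1)} (hv : ⟪insertCoord i y (upperFn i K y), v⟫ = suppFn K v)
    (hw : ⟪insertCoord i y (upperFn i K y), w⟫ = suppFn K w) : w i • v = v i • w := by
  have hpr : w i • removeCoord i v = v i • removeCoord i w := ext_inner_right ℝ fun e => by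
    have hve := inner_removeCoord_add_mul_fderiv_eq_zero i hK hy hd hv e
    have hwe := inner_removeCoord_add_mul_fderiv_eq_zero i hK hy hd hw e
    rw [real_inner_smul_left, real_inner_smul_left]
    linear_combination w i * hve - v i * hwe
  have h1 : w i • v = insertCoord i (w i • removeCoord i v) (w i * v i) := by
    rw [insertCoord_smul, insertCoord_removeCoord]
  have h2 : v i • w = insertCoord i (v i • removeCoord i w) (v i * w i) := by
    rw [insertCoord_smul, insertCoord_removeCoord]
  rw [h1, h2, hpr, mul_comm]

/-- Normals at a graph point over a point of differentiability are parallel, and `u`, `-u` are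
never both normals of a body. -/
lemma isSmoothPoint_insertCoord_upperFn (hK : IsCompact K) (hint : (interior K).Nonempty)
    {y : Euc m} (hy : y ∈ interior (removeCoord i '' K))
    (hd : DifferentiableAt ℝ (upperFn i K) y) :
    IsSmoothPoint K (insertCoord i y (upperFn i K y)) := by
  refine ⟨insertCoord_upperFn_mem i hK (interior_subset hy), fun v w hv hw => ?_⟩
  have hvw := smul_eq_smul_of_isUnitNormal i hK hy hd hv.2 hw.2
  have hwi : w i ≠ 0 := by
    intro hwi
    have hpr : removeCoord i w = 0 := ext_inner_right ℝ fun e => by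
      simpa [hwi] using inner_removeCoord_add_mul_fderiv_eq_zero i hK hy hd hw.2 e
    have hw0 : w = 0 := by
      rw [← insertCoord_removeCoord i w, hpr, hwi, insertCoord_zero_zero]
    simpa [hw0] using hw.1
  have habs : |w i| = |v i| := by simpa [norm_smul, hv.1, hw.1] using congrArg norm hvw
  rcases abs_eq_abs.1 habs with h | h
  · rw [h] at hvw
    exact smul_right_injective _ (h ▸ hwi) hvw
  · rw [h, neg_smul, ← smul_neg] at hvw
    have hvi : v i ≠ 0 := fun hvi => hwi (by rw [h, hvi, neg_zero])
    have hwv : w = -v := (smul_right_injective _ hvi hvw).symm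
    exact absurd (hwv ▸ hw) (not_isUnitNormal_neg hK.isBounded hint hv)

end Smoothness

lemma LocallyLipschitzOn.measure_not_differentiableAt_eq_zero {E F : Type*}
    [NormedAddCommGroup E] [NormedSpace ℝ E] [FiniteDimensional ℝ E] [MeasurableSpace E]
    [BorelSpace E] [NormedAddCommGroup F] [NormedSpace ℝ F] [FiniteDimensional ℝ F]
    {μ : Measure E} [μ.IsAddHaarMeasure] {f : E → F} {s : Set E} (hs : IsOpen s)
    (hf : LocallyLipschitzOn s f) : μ {x ∈ s | ¬ DifferentiableAt ℝ f x} = 0 := by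
  refine measure_null_of_locally_null _ fun x hx => ?_
  obtain ⟨C, t, ht, hlip⟩ := hf hx.1
  rw [hs.nhdsWithin_eq hx.1] at ht
  refine ⟨_, inter_mem_nhdsWithin _ (interior_mem_nhds.2 ht), measure_mono_null ?_
    (ae_iff.1 (hlip.ae_differentiableWithinAt_of_mem (μ := μ)))⟩
  rintro z ⟨⟨-, hz⟩, hzt⟩ hdiff
  exact hz ((hdiff (interior_subset hzt)).differentiableAt (mem_interior_iff_mem_nhds.1 hzt))

lemma hausdorffMeasure_eq_zero_of_volume_eq_zero {m : ℕ} {N : Set (Euc m)} (h : volume N = 0) :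
    μH[(m : ℝ)] N = 0 :=
  Measure.absolutelyContinuous_isAddHaarMeasure _ _ h

lemma MeasurableSet.exists_isSigmaCompact_subset_measure_diff_eq_zero {α : Type*}
    [TopologicalSpace α] [MeasurableSpace α] [OpensMeasurableSpace α] [T2Space α]
    {μ : Measure α} [μ.InnerRegularCompactLTTop] {A : Set α} (hA : MeasurableSet A)
    (hfin : μ A ≠ ⊤) : ∃ Q ⊆ A, IsSigmaCompact Q ∧ μ (A \ Q) = 0 := by
  have hQ : ∀ k : ℕ, ∃ Q ⊆ A, IsCompact Q ∧ μ (A \ Q) < (k : ℝ≥0∞)⁻¹ := fun k =>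
    hA.exists_isCompact_sdiff_lt hfin (ENNReal.inv_ne_zero.2 (ENNReal.natCast_ne_top k))
  choose Q hQA hQ hμQ using hQ
  refine ⟨⋃ k, Q k, iUnion_subset hQA, isSigmaCompact_iUnion_of_isCompact Q hQ, ?_⟩
  by_contra hpos
  obtain ⟨k, hk⟩ := ENNReal.exists_inv_nat_lt hpos
  exact (hk.trans_le (measure_mono (sdiff_subset_sdiff_right (subset_iUnion Q k)))).not_gt
    (hμQ k)

section UpperPatch

variable {m : ℕ} (i : Fin (m + 1)) (c : ℝ) {K : Set (Euc (m + 1))}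

def upperPatch (K : Set (Euc (m + 1))) : Set (Euc (m + 1)) :=
  {x ∈ K | ∃ v, IsUnitNormal K x v ∧ c ≤ v i}

lemma isCompact_upperPatch (hK : IsCompact K) : IsCompact (upperPatch i c K) := by
  have : upperPatch i c K = Prod.fst ''
      ({p : Euc (m + 1) × Euc (m + 1) | p.1 ∈ K ∧ IsUnitNormal K p.1 p.2} ∩ {p | c ≤ p.2 i}) := by
    ext x
    simp only [upperPatch, mem_image, mem_inter_iff, mem_ofPred_eq, Prod.exists,
      exists_and_right, exists_eq_right]
    tauto
  rw [this]
  exact ((isCompact_normalPairs hK hK).inter_right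
    (isClosed_le continuous_const (by fun_prop))).image continuous_fst

variable {i c}

lemma apply_sub_le_of_isUnitNormal (hK : IsBounded K) (hc : 0 < c) {z z' w : Euc (m + 1)}
    (hz' : z' ∈ K) (hw : IsUnitNormal K z w) (hwc : c ≤ w i) :
    z' i - z i ≤ c⁻¹ * ‖removeCoord i z' - removeCoord i z‖ := by
  have h1 : ⟪z' - z, w⟫ ≤ 0 := by
    rw [inner_sub_left, hw.2]
    linarith [inner_le_suppFn hK hz' w]
  rw [← insertCoord_removeCoord i (z' - z), inner_insertCoord, removeCoord_sub] at h1
  have h2 : -⟪removeCoord i z' - removeCoord i z, removeCoord i w⟫ ≤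
      ‖removeCoord i z' - removeCoord i z‖ := by
    have hw1 : ‖removeCoord i w‖ ≤ 1 := hw.1 ▸ norm_removeCoord_le i w
    refine (neg_le_abs _).trans ((abs_real_inner_le_norm _ _).trans ?_)
    exact mul_le_of_le_one_right (norm_nonneg _) hw1
  rw [inv_mul_eq_div, le_div_iff₀ hc]
  rcases le_or_gt (z' i - z i) 0 with hneg | hpos
  · nlinarith [norm_nonneg (removeCoord i z' - removeCoord i z)]
  · have : (z' i - z i) * c ≤ (z' i - z i) * w i := mul_le_mul_of_nonneg_left hwc hpos.le
    simp only [PiLp.sub_apply] at h1 this ⊢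
    linarith

lemma lipschitzOnWith_upperFn (hK : IsCompact K) (hc : 0 < c) :
    LipschitzOnWith (Real.toNNReal c⁻¹) (upperFn i K) (removeCoord i '' upperPatch i c K) := by
  rw [lipschitzOnWith_iff_dist_le_mul]
  rintro _ ⟨x, ⟨hxK, v, hv, hvc⟩, rfl⟩ _ ⟨x', ⟨hx'K, v', hv', hv'c⟩, rfl⟩
  rw [upperFn_removeCoord i hK hxK hv.2 (hc.trans_le hvc),
    upperFn_removeCoord i hK hx'K hv'.2 (hc.trans_le hv'c), Real.dist_eq, dist_eq_norm,
    Real.coe_toNNReal _ (by positivity), abs_le]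
  have h := apply_sub_le_of_isUnitNormal hK.isBounded hc hx'K hv hvc
  have h' := apply_sub_le_of_isUnitNormal hK.isBounded hc hxK hv' hv'c
  rw [norm_sub_rev] at h
  constructor <;> linarith

end UpperPatch

section Charts

variable {m : ℕ} (i : Fin (m + 1)) {c : ℝ} {K : Set (Euc (m + 1))}

lemma lipschitzWith_insertCoord_graph {G : Euc m → ℝ} {L : ℝ≥0} (hG : LipschitzWith L G) :
    LipschitzWith (L + 1) fun y => insertCoord i y (G y) := by
  refine LipschitzWith.of_dist_le_mul fun y y' => ?_
  rw [dist_eq_norm, dist_eq_norm, ← insertCoord_sub]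
  have hGy := hG.dist_le_mul y y'
  rw [Real.dist_eq, dist_eq_norm] at hGy
  push_cast
  linarith [norm_insertCoord_le i (y - y') (G y - G y')]

/-- Rademacher's theorem for the concave function `upperFn`, together with the nullity of the
frontier of the convex shadow. -/
lemma volume_not_differentiableAt_upperFn (hconv : Convex ℝ K) (hK : IsCompact K) :
    volume {y ∈ removeCoord i '' K | ¬ (y ∈ interior (removeCoord i '' K) ∧
      DifferentiableAt ℝ (upperFn i K) y)} = 0 := by
  refine measure_mono_null (t := frontier (removeCoord i '' K) ∪
      {y ∈ interior (removeCoord i '' K) | ¬ DifferentiableAt ℝ (upperFn i K) y}) ?_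
    (measure_union_null
    ((hconv.is_linear_image (isLinearMap_removeCoord i)).addHaar_frontier volume)
    (LocallyLipschitzOn.measure_not_differentiableAt_eq_zero isOpen_interior
      (concaveOn_upperFn i hconv hK).locallyLipschitzOn_interior))
  rintro y ⟨hy, hgood⟩
  by_cases hyint : y ∈ interior (removeCoord i '' K)
  · exact Or.inr ⟨hyint, fun hdiff => hgood ⟨hyint, hdiff⟩⟩
  · exact Or.inl ⟨subset_closure hy, hyint⟩

/-- The patch is the image of its shadow under a Lipschitz graph map, which sends volume-null
sets to `μH[m]`-null sets. -/
lemma exists_isSigmaCompact_smoothPoints_upperPatch (hconv : Convex ℝ K) (hK : IsCompact K)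
    (hint : (interior K).Nonempty) (hc : 0 < c) :
    ∃ C, IsSigmaCompact C ∧ (∀ x ∈ C, IsSmoothPoint K x) ∧
      μH[(m : ℝ)] (upperPatch i c K \ C) = 0 := by
  set D := interior (removeCoord i '' K) ∩ {y | DifferentiableAt ℝ (upperFn i K) y}
  have hD : MeasurableSet D :=
    isOpen_interior.measurableSet.inter (measurableSet_of_differentiableAt ℝ _)
  have hDfin : volume D ≠ ⊤ := ((hK.image (continuous_removeCoord i)).measure_lt_top.trans_le'
    (measure_mono fun y hy => interior_subset hy.1)).ne
  obtain ⟨Q, hQD, hQ, hDQ⟩ := hD.exists_isSigmaCompact_subset_measure_diff_eq_zero hDfin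
  obtain ⟨G, hGlip, hG⟩ := (lipschitzOnWith_upperFn hK hc).extend_real
  have hgraph : ∀ x ∈ upperPatch i c K,
      insertCoord i (removeCoord i x) (G (removeCoord i x)) = x := by
    intro x hx
    obtain ⟨hxK, v, hv, hvc⟩ := id hx
    rw [← hG ⟨x, hx, rfl⟩, upperFn_removeCoord i hK hxK hv.2 (hc.trans_le hvc),
      insertCoord_removeCoord]
  refine ⟨upperPatch i c K ∩ removeCoord i ⁻¹' Q, ?_, ?_, ?_⟩
  · obtain ⟨Qs, hQs, rfl⟩ := hQ
    rw [preimage_iUnion, inter_iUnion]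
    exact isSigmaCompact_iUnion_of_isCompact _ fun k => (isCompact_upperPatch i c hK).inter_right
      ((hQs k).isClosed.preimage (continuous_removeCoord i))
  · rintro x ⟨⟨hxK, v, hv, hvc⟩, hxQ⟩
    have hxD := hQD hxQ
    have := isSmoothPoint_insertCoord_upperFn i hK hint hxD.1 hxD.2
    rwa [upperFn_removeCoord i hK hxK hv.2 (hc.trans_le hvc), insertCoord_removeCoord] at this
  have hshadow : volume (removeCoord i '' upperPatch i c K \ Q) = 0 := by
    refine measure_mono_null (fun y hy => ?_)
      (measure_union_null (volume_not_differentiableAt_upperFn i hconv hK) hDQ)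
    obtain ⟨⟨x, hx, rfl⟩, hyQ⟩ := hy
    by_cases hyD : removeCoord i x ∈ D
    · exact Or.inr ⟨hyD, hyQ⟩
    · exact Or.inl ⟨⟨x, hx.1, rfl⟩, hyD⟩
  refine measure_mono_null (t := (fun y => insertCoord i y (G y)) ''
    (removeCoord i '' upperPatch i c K \ Q)) ?_ (le_antisymm ?_ zero_le)
  · rintro x ⟨hx, hxQ⟩
    exact ⟨removeCoord i x, ⟨⟨x, hx, rfl⟩, fun h => hxQ ⟨hx, h⟩⟩, hgraph x hx⟩
  · calc _ ≤ _ := (lipschitzWith_insertCoord_graph i hGlip).hausdorffMeasure_image_le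
          (Nat.cast_nonneg m) _
      _ = 0 := by rw [hausdorffMeasure_eq_zero_of_volume_eq_zero hshadow, mul_zero]

end Charts

lemma IsSigmaCompact.union {X : Type*} [TopologicalSpace X] {s t : Set X} (hs : IsSigmaCompact s)
    (ht : IsSigmaCompact t) : IsSigmaCompact (s ∪ t) := by
  rw [union_eq_iUnion]
  exact isSigmaCompact_iUnion _ fun b => by cases b <;> assumption

lemma interior_neg_nonempty {n : ℕ} {K : Set (Euc n)} (hint : (interior K).Nonempty) :
    (interior (-K)).Nonempty := by
  obtain ⟨z, hz⟩ := hint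
  refine ⟨-z, ?_⟩
  rw [← Set.neg_preimage, ← Homeomorph.coe_neg, ← (Homeomorph.neg _).preimage_interior]
  simpa using hz

lemma exists_mem_upperPatch {m : ℕ} {K : Set (Euc (m + 1))} {x u : Euc (m + 1)} (hx : x ∈ K)
    (hu : IsUnitNormal K x u) : ∃ i, ∃ k : ℕ,
      x ∈ upperPatch i (1 / ((k : ℝ) + 1)) K ∨ -x ∈ upperPatch i (1 / ((k : ℝ) + 1)) (-K) := by
  obtain ⟨i, hi⟩ : ∃ i, u i ≠ 0 := by
    by_contra! h
    have hu0 : u = 0 := by ext i; simpa using h i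
    simpa [hu0] using hu.1
  obtain ⟨k, hk⟩ := exists_nat_one_div_lt (abs_pos.2 hi)
  refine ⟨i, k, ?_⟩
  rcases le_or_gt 0 (u i) with hui | hui
  · exact Or.inl ⟨hx, u, hu, (abs_of_nonneg hui ▸ hk).le⟩
  · exact Or.inr ⟨neg_mem_neg.2 hx, -u, isUnitNormal_neg_iff.2 hu,
      by simpa [abs_of_neg hui] using hk.le⟩

/-- Every normal has a coordinate bounded away from `0`, so the boundary points of `K` are
covered by countably many upper patches of `K` and of `-K`. -/
lemma exists_isSigmaCompact_smoothPoints {n : ℕ} {K : Set (Euc n)} (hconv : Convex ℝ K)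
    (hK : IsCompact K) (hint : (interior K).Nonempty) :
    ∃ C, IsSigmaCompact C ∧ (∀ x ∈ C, IsSmoothPoint K x) ∧
      μH[(n : ℝ) - 1] ({x ∈ K | ∃ u, IsUnitNormal K x u} \ C) = 0 := by
  cases n with
  | zero =>
    refine ⟨∅, isSigmaCompact_empty, by simp, measure_mono_null ?_ measure_empty⟩
    rintro x ⟨⟨-, u, hu⟩, -⟩
    simpa [Subsingleton.elim u 0] using hu.1
  | succ m =>
    have hc : ∀ k : ℕ, 0 < 1 / ((k : ℝ) + 1) := fun k => by positivity
    choose C hC hCs hCK using fun (i : Fin (m + 1)) (k : ℕ) =>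
      exists_isSigmaCompact_smoothPoints_upperPatch i hconv hK hint (hc k)
    choose C' hC' hC's hC'K using fun (i : Fin (m + 1)) (k : ℕ) =>
      exists_isSigmaCompact_smoothPoints_upperPatch i hconv.neg hK.neg
        (interior_neg_nonempty hint) (hc k)
    refine ⟨⋃ p : Fin (m + 1) × ℕ, C p.1 p.2 ∪ -C' p.1 p.2,
      isSigmaCompact_iUnion _ fun p => (hC p.1 p.2).union
        (by rw [← Set.image_neg_eq_neg]; exact (hC' p.1 p.2).image continuous_neg), ?_, ?_⟩
    · simp only [mem_iUnion, mem_union, Set.mem_neg]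
      rintro x ⟨p, hx | hx⟩
      · exact hCs p.1 p.2 x hx
      · exact (hC's p.1 p.2 _ hx).of_neg
    rw [Nat.cast_add_one, add_sub_cancel_right]
    refine measure_mono_null (t := ⋃ p : Fin (m + 1) × ℕ,
      (upperPatch p.1 (1 / ((p.2 : ℝ) + 1)) K \ C p.1 p.2) ∪
        -(upperPatch p.1 (1 / ((p.2 : ℝ) + 1)) (-K) \ C' p.1 p.2)) ?_
      (measure_iUnion_null fun p => measure_union_null (hCK p.1 p.2) ?_)
    · rintro x ⟨⟨hxK, u, hu⟩, hxC⟩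
      obtain ⟨i, k, hx | hx⟩ := exists_mem_upperPatch hxK hu
      · exact mem_iUnion.2 ⟨(i, k), Or.inl ⟨hx, fun h => hxC (mem_iUnion.2 ⟨_, Or.inl h⟩)⟩⟩
      · exact mem_iUnion.2 ⟨(i, k), Or.inr ⟨hx, fun h => hxC (mem_iUnion.2 ⟨_, Or.inr h⟩)⟩⟩
    · rw [← Set.image_neg_eq_neg, isometry_neg.hausdorffMeasure_image (Or.inl (Nat.cast_nonneg m))]
      exact hC'K p.1 p.2

lemma surfMeas_compl_sphericalImage {n : ℕ} {K C : Set (Euc n)} (hK : IsClosed K)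
    (hC : μH[(n : ℝ) - 1] ({x ∈ K | ∃ u, IsUnitNormal K x u} \ C) = 0) :
    surfMeas K (sphericalImage K C)ᶜ = 0 := by
  refine measure_mono_null ?_ hC
  rintro x ⟨hx, u, hu, hu1, hxu⟩
  exact ⟨⟨hK.frontier_subset hx, u, hu1, hxu⟩, fun hxC => hu ⟨x, hxC, hu1, hxu⟩⟩

theorem suppFn_wulff_perturbation_deriv_ae_general (n : ℕ) (K : Set (Euc n)) (hK : IsConvexBody K)
    (h0 : (0 : Euc n) ∈ interior K) (f : Euc n → ℝ) (hf : Continuous f)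
    (μ : Measure (Euc n)) (hμ : ∀ Ω : Set (Euc n), MeasurableSet Ω → μ Ω = surfMeas K Ω) :
    ∀ᵐ u ∂μ,
      HasDerivAt (fun t => suppFn (wulff (fun v => suppFn K v + t * f v)) u) (f u) 0 := by
  obtain ⟨hconv, hcomp, hint⟩ := hK
  obtain ⟨C, hCσ, hCsmooth, hCnull⟩ := exists_isSigmaCompact_smoothPoints hconv hcomp hint
  have hΩ := measurableSet_sphericalImage hcomp hCσ
  have hnull : μ (sphericalImage K C)ᶜ = 0 := by
    rw [hμ _ hΩ.compl]
    exact surfMeas_compl_sphericalImage hcomp.isClosed hCnull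
  rw [ae_iff]
  refine measure_mono_null ?_ hnull
  rintro u hu ⟨x, hxC, hxu⟩
  exact hu (hasDerivAt_suppFn_wulff hconv hcomp h0 hf (hCsmooth x hxC) hxu)

/-- For `S_K`-almost every `u ∈ S^{n-1}`, the support function of the Wulff
perturbation `K_t(f) = W(h_K + tf)` is differentiable at `t = 0` with derivative `f(u)`. -/
theorem suppFn_wulff_perturbation_deriv_ae (n : ℕ) (K : Set (Euc n)) (hK : IsConvexBody K)
    (h0 : (0 : Euc n) ∈ interior K) (f : Euc n → ℝ) (hf : Continuous f)
    (a b : ℝ) (ha : a < 0) (hb : 0 < b)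
    (hpos : ∀ t ∈ Set.Ioo a b, ∀ u : Euc n, ‖u‖ = 1 → 0 < suppFn K u + t * f u)
    (μ : Measure (Euc n)) (hμ : ∀ Ω : Set (Euc n), MeasurableSet Ω → μ Ω = surfMeas K Ω) :
    ∀ᵐ u ∂μ,
      HasDerivAt (fun t => suppFn (wulff (fun v => suppFn K v + t * f v)) u) (f u) 0 :=
  suppFn_wulff_perturbation_deriv_ae_general n K hK h0 f hf μ hμ
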